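/- For every r_obs > 0 and every k > 0, one has ∫₀^∞ [ erf( r_obs/(2√τ) ) − (r_obs/√(πτ))·exp(−r_obs²/(4τ)) ] · exp(−k·τ) dτ = 1/k − exp(−r_obs·√k)·( 1/k + r_obs/√k ). -/

import Mathlib

/-!
The integrand is the derivative of an explicit primitive built from `erf (a / (2√t))` and
`erf (a / (2√t) ± √(k t))`: since `(a / (2√t) ± √(k t))² = a² / (4t) + k t ± a √k`, all three
Gaussian factors produced by differentiating are multiples of `exp (-a² / (4t) - k t)`, and the
coefficients are chosen so that they combine into the integrand. The integrand is nonnegative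
(`erf x ≥ (2/√π) x exp (-x²)`), so the improper integral over `(0, ∞)` is the difference of the
limits of the primitive at `∞` and at `0⁺`, and integrability comes for free.
-/

open Real MeasureTheory

/-- The error function `erf a = (2/√π) ∫₀^a exp(−b²) db`. -/
noncomputable def erf (a : ℝ) : ℝ := (2 / Real.sqrt π) * ∫ b in (0:ℝ)..a, Real.exp (-b^2)

open Filter Set Topology

theorem integral_Ioi_of_hasDerivAt_of_tendsto_nhdsGT_of_nonneg {g g' : ℝ → ℝ} {a l₀ l : ℝ}
    (hg₀ : Tendsto g (𝓝[>] a) (𝓝 l₀)) (hderiv : ∀ x ∈ Ioi a, HasDerivAt g (g' x) x)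
    (g'_nonneg : ∀ x ∈ Ioi a, 0 ≤ g' x) (hg : Tendsto g atTop (𝓝 l)) :
    ∫ x in Ioi a, g' x = l - l₀ := by
  have := integral_Ioi_of_hasDerivAt_of_nonneg (g := Function.update g a l₀) (l := l) ?_ ?_
    g'_nonneg ?_
  · simpa using this
  · simpa [Ici_sdiff_left] using hg₀
  · intro x hx
    refine (hderiv x hx).congr_of_eventuallyEq ?_
    filter_upwards [Ioi_mem_nhds hx] with y hy using Function.update_of_ne hy.ne' _ _
  · refine hg.congr' ?_
    filter_upwards [eventually_gt_atTop a] with y hy using (Function.update_of_ne hy.ne' _ _).symm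

theorem hasDerivAt_erf (x : ℝ) : HasDerivAt erf (2 / √π * exp (-x ^ 2)) x :=
  ((continuous_exp.comp (continuous_pow 2).neg).integral_hasStrictDerivAt 0 x).hasDerivAt
    |>.const_mul _

theorem continuous_erf : Continuous erf :=
  continuous_iff_continuousAt.2 fun x => (hasDerivAt_erf x).continuousAt

@[simp]
theorem erf_zero : erf 0 = 0 := by simp [erf]

theorem erf_neg (x : ℝ) : erf (-x) = -erf x := by
  have h := intervalIntegral.integral_comp_neg (a := 0) (b := x) fun b => exp (-b ^ 2)
  simp only [neg_sq, neg_zero] at h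
  rw [erf, erf, intervalIntegral.integral_symm, ← h, mul_neg]

theorem tendsto_erf_atTop : Tendsto erf atTop (𝓝 1) := by
  have hint : IntegrableOn (fun b : ℝ => exp (-b ^ 2)) (Ioi 0) := by
    simpa using (integrableOn_Ioi_exp_neg_mul_sq_iff (b := 1)).2 one_pos
  have hgauss : ∫ b in Ioi (0:ℝ), exp (-b ^ 2) = √π / 2 := by
    simpa using integral_gaussian_Ioi 1
  have h := (intervalIntegral_tendsto_integral_Ioi 0 hint tendsto_id).const_mul (2 / √π)
  rwa [hgauss, div_mul_div_cancel₀ (by positivity), div_self (by positivity)] at h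

theorem tendsto_erf_atBot : Tendsto erf atBot (𝓝 (-1)) := by
  simpa [Function.comp_def, erf_neg] using (tendsto_erf_atTop.comp tendsto_neg_atBot_atTop).neg

theorem mul_exp_neg_sq_le_erf {x : ℝ} (hx : 0 ≤ x) : 2 / √π * x * exp (-x ^ 2) ≤ erf x := by
  have h : ∫ _ in (0:ℝ)..x, exp (-x ^ 2) ≤ ∫ b in (0:ℝ)..x, exp (-b ^ 2) := by
    refine intervalIntegral.integral_mono_on hx intervalIntegrable_const
      ((by fun_prop : Continuous fun b : ℝ => exp (-b ^ 2)).intervalIntegrable 0 x) fun b hb => ?_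
    gcongr
    · exact hb.1
    · exact hb.2
  rw [erf, mul_assoc]
  gcongr
  simpa using h

noncomputable def erfDrift (b c t : ℝ) : ℝ := erf (b / √t + c * √t)

theorem hasDerivAt_erfDrift (b c : ℝ) {t : ℝ} (ht : 0 < t) :
    HasDerivAt (erfDrift b c)
      (exp (-(b ^ 2 / t)) * exp (-(c ^ 2 * t)) * exp (-(2 * b * c)) * (c * t - b)
        / (√π * t * √t)) t := by
  have hst : 0 < √t := sqrt_pos.2 ht
  have hsqrt : HasDerivAt (√·) (1 / (2 * √t)) t := hasDerivAt_sqrt ht.ne'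
  have harg : HasDerivAt (fun s => b / √s + c * √s) ((c * t - b) / (2 * t * √t)) t := by
    refine (((hasDerivAt_const t b).div hsqrt hst.ne').add (hsqrt.const_mul c)).congr_deriv ?_
    field_simp
    rw [sq_sqrt ht.le]
    ring
  have hsq : (b / √t + c * √t) ^ 2 = b ^ 2 / t + c ^ 2 * t + 2 * b * c := by
    field_simp
    rw [sq_sqrt ht.le]
    ring
  refine ((hasDerivAt_erf _).comp t harg).congr_deriv ?_
  rw [hsq, ← exp_add, ← exp_add]
  field_simp
  ring_nf

theorem tendsto_div_sqrt_nhdsGT_zero {b : ℝ} (hb : 0 < b) :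
    Tendsto (fun t => b / √t) (𝓝[>] 0) atTop := by
  simpa [div_eq_mul_inv, ← sqrt_inv] using
    (tendsto_sqrt_atTop.comp tendsto_inv_nhdsGT_zero).const_mul_atTop hb

theorem tendsto_div_sqrt_atTop (b : ℝ) : Tendsto (fun t => b / √t) atTop (𝓝 0) :=
  tendsto_const_nhds.div_atTop tendsto_sqrt_atTop

theorem tendsto_erfDrift_nhdsGT_zero {b : ℝ} (hb : 0 < b) (c : ℝ) :
    Tendsto (erfDrift b c) (𝓝[>] 0) (𝓝 1) := by
  have hc : Tendsto (fun t => c * √t) (𝓝[>] 0) (𝓝 0) := by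
    simpa using ((continuous_sqrt.tendsto 0).const_mul c).mono_left nhdsWithin_le_nhds
  exact tendsto_erf_atTop.comp ((tendsto_div_sqrt_nhdsGT_zero hb).atTop_add hc)

theorem tendsto_erfDrift_zero_atTop (b : ℝ) : Tendsto (erfDrift b 0) atTop (𝓝 0) := by
  have h := (continuous_erf.tendsto 0).comp (tendsto_div_sqrt_atTop b)
  rw [erf_zero] at h
  exact h.congr fun t => by simp [erfDrift]

theorem tendsto_erfDrift_atTop_of_pos (b : ℝ) {c : ℝ} (hc : 0 < c) :
    Tendsto (erfDrift b c) atTop (𝓝 1) :=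
  tendsto_erf_atTop.comp
    ((tendsto_div_sqrt_atTop b).add_atTop (tendsto_sqrt_atTop.const_mul_atTop hc))

theorem tendsto_erfDrift_atTop_of_neg (b : ℝ) {c : ℝ} (hc : c < 0) :
    Tendsto (erfDrift b c) atTop (𝓝 (-1)) :=
  tendsto_erf_atBot.comp
    ((tendsto_div_sqrt_atTop b).add_atBot (tendsto_sqrt_atTop.const_mul_atTop_of_neg hc))

-- Probability that a particle diffusing in `ℝ³` with unit diffusion coefficient from the origin
-- lies in the ball of radius `a` at time `τ`.
noncomputable def ballOccupancy (a τ : ℝ) : ℝ :=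
  erf (a / (2 * √τ)) - a / √(π * τ) * exp (-(a ^ 2) / (4 * τ))

theorem ballOccupancy_nonneg {a τ : ℝ} (ha : 0 ≤ a) (hτ : 0 < τ) : 0 ≤ ballOccupancy a τ := by
  have hx : 0 ≤ a / (2 * √τ) := by positivity
  have h := mul_exp_neg_sq_le_erf hx
  rw [ballOccupancy, sub_nonneg]
  convert h using 1
  rw [sqrt_mul pi_pos.le, div_pow, mul_pow, sq_sqrt hτ.le]
  field_simp
  ring_nf

noncomputable def impactPrimitive (a k t : ℝ) : ℝ :=
  -(exp (-(k * t)) * erfDrift (a / 2) 0 t) / k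
    + (1 / (2 * k) - a / (2 * √k)) * exp (a * √k) * erfDrift (a / 2) √k t
    + (1 / (2 * k) + a / (2 * √k)) * exp (-(a * √k)) * erfDrift (a / 2) (-√k) t

theorem hasDerivAt_impactPrimitive (a : ℝ) {k t : ℝ} (hk : 0 < k) (ht : 0 < t) :
    HasDerivAt (impactPrimitive a k) (ballOccupancy a t * exp (-(k * t))) t := by
  have hexp : HasDerivAt (fun s => exp (-(k * s))) (-k * exp (-(k * t))) t := by
    simpa [mul_comm] using ((hasDerivAt_id t).const_mul k).neg.exp
  have h := (((hexp.mul (hasDerivAt_erfDrift (a / 2) 0 ht)).neg.div_const k).add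
    ((hasDerivAt_erfDrift (a / 2) √k ht).const_mul
      ((1 / (2 * k) - a / (2 * √k)) * exp (a * √k)))).add
    ((hasDerivAt_erfDrift (a / 2) (-√k) ht).const_mul
      ((1 / (2 * k) + a / (2 * √k)) * exp (-(a * √k))))
  refine h.congr_deriv ?_
  have hcross : exp (-(2 * (a / 2) * √k)) = (exp (a * √k))⁻¹ := by
    rw [← exp_neg]; ring_nf
  have hcross' : exp (-(2 * (a / 2) * -√k)) = exp (a * √k) := by ring_nf
  simp only [ballOccupancy, erfDrift, neg_sq, sq_sqrt hk.le, sqrt_mul pi_pos.le, div_pow,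
    hcross, hcross', exp_neg (a * √k), mul_zero, zero_pow two_ne_zero, zero_mul, neg_zero,
    exp_zero, mul_one]
  field_simp
  ring_nf

theorem tendsto_impactPrimitive_nhdsGT_zero {a : ℝ} (ha : 0 < a) (k : ℝ) :
    Tendsto (impactPrimitive a k) (𝓝[>] 0)
      (𝓝 (-(1 / k) + (1 / (2 * k) - a / (2 * √k)) * exp (a * √k)
        + (1 / (2 * k) + a / (2 * √k)) * exp (-(a * √k)))) := by
  have hexp : Tendsto (fun t => exp (-(k * t))) (𝓝[>] 0) (𝓝 1) :=
    ((by fun_prop : Continuous fun t => exp (-(k * t))).tendsto' 0 1 (by simp)).mono_left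
      nhdsWithin_le_nhds
  have h : Tendsto (impactPrimitive a k) (𝓝[>] 0) _ :=
    (((hexp.mul (tendsto_erfDrift_nhdsGT_zero (half_pos ha) 0)).neg.div_const k).add
      ((tendsto_erfDrift_nhdsGT_zero (half_pos ha) √k).const_mul _)).add
      ((tendsto_erfDrift_nhdsGT_zero (half_pos ha) (-√k)).const_mul _)
  convert h using 2
  ring

theorem tendsto_impactPrimitive_atTop (a : ℝ) {k : ℝ} (hk : 0 < k) :
    Tendsto (impactPrimitive a k) atTop
      (𝓝 ((1 / (2 * k) - a / (2 * √k)) * exp (a * √k)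
        - (1 / (2 * k) + a / (2 * √k)) * exp (-(a * √k)))) := by
  have hexp : Tendsto (fun t => exp (-(k * t))) atTop (𝓝 0) :=
    tendsto_exp_atBot.comp (tendsto_neg_atTop_atBot.comp (tendsto_id.const_mul_atTop hk))
  have hsk : 0 < √k := sqrt_pos.2 hk
  have h : Tendsto (impactPrimitive a k) atTop _ :=
    (((hexp.mul (tendsto_erfDrift_zero_atTop (a / 2))).neg.div_const k).add
      ((tendsto_erfDrift_atTop_of_pos (a / 2) hsk).const_mul _)).add
      ((tendsto_erfDrift_atTop_of_neg (a / 2) (neg_neg_of_pos hsk)).const_mul _)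
  convert h using 2
  ring

/-- The asymptotic impact of the worst-case noise source (located at the receiver),
with molecule degradation rate `k > 0` and no flow. -/
theorem asymptotic_impact_worst_case_with_degradation (r_obs k : ℝ)
    (hr : 0 < r_obs) (hk : 0 < k) :
    ∫ τ in Set.Ioi (0:ℝ),
      (erf (r_obs / (2 * Real.sqrt τ))
        - (r_obs / Real.sqrt (π*τ)) * Real.exp (-(r_obs^2) / (4*τ)))
      * Real.exp (-(k*τ))
    = 1/k - Real.exp (-(r_obs * Real.sqrt k)) * (1/k + r_obs / Real.sqrt k) := by
  have h := integral_Ioi_of_hasDerivAt_of_tendsto_nhdsGT_of_nonneg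
    (tendsto_impactPrimitive_nhdsGT_zero hr k)
    (fun t ht => hasDerivAt_impactPrimitive r_obs hk ht)
    (fun t ht => mul_nonneg (ballOccupancy_nonneg hr.le ht) (exp_nonneg _))
    (tendsto_impactPrimitive_atTop r_obs hk)
  exact h.trans (by ring)
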